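/- If s = (r,u,v) is a plan-step with both u and v in the same subgraph S_x of the partition, and s is applicable to arrangement a, then γ(a) = γ(s(a)): internal moves do not change the configuration tuple. -/

import Mathlib

open scoped Classical

/-- An arrangement of robots `R` on vertices `V`: an injective partial map `V ⇀ R`. -/
abbrev Arrangement (V R : Type) := V → Option R

/-- Injectivity of an arrangement: no robot occupies two vertices. -/
def ArrInj {V R : Type} (a : Arrangement V R) : Prop :=
  ∀ u v r, a u = some r → a v = some r → u = v

/-- A plan-step `(r, u, v)` is applicable if `r` is at `u`, `v` is unoccupied,
and `(u,v)` is an edge. -/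
def Applicable {V R : Type} (G : SimpleGraph V) (a : Arrangement V R)
    (s : R × V × V) : Prop :=
  G.Adj s.2.1 s.2.2 ∧ a s.2.1 = some s.1 ∧ a s.2.2 = none

/-- Applying a plan-step: move the robot from `u` to `v`. -/
noncomputable def applyStep {V R : Type} (a : Arrangement V R) (s : R × V × V) :
    Arrangement V R :=
  fun w => if w = s.2.2 then some s.1 else if w = s.2.1 then none else a w

/-- `IsPlan G P a b`: the sequence of plan-steps `P` is a valid concrete plan in `G`
transforming arrangement `a` into arrangement `b`. -/
def IsPlan {V R : Type} (G : SimpleGraph V) :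
    List (R × V × V) → Arrangement V R → Arrangement V R → Prop
  | [], a, b => a = b
  | s :: P, a, b => Applicable G a s ∧ IsPlan G P (applyStep a s) b

/-- Mutual reachability by plans confined to the vertex set `S` (an induced
subgraph of `G`). -/
def SimIn {V R : Type} (G : SimpleGraph V) (S : Set V) (a b : Arrangement V R) : Prop :=
  (∃ P : List (R × V × V), (∀ s ∈ P, s.2.1 ∈ S ∧ s.2.2 ∈ S) ∧ IsPlan G P a b) ∧
  (∃ Q : List (R × V × V), (∀ s ∈ Q, s.2.1 ∈ S ∧ s.2.2 ∈ S) ∧ IsPlan G Q b a)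

/-- The configuration (equivalence class) of the arrangement `a` within the
subgraph `S` of `G`. -/
def clsIn {V R : Type} (G : SimpleGraph V) (S : Set V) (a : Arrangement V R) :
    Set (Arrangement V R) :=
  {b | SimIn G S a b}

/-- The arrangement `a ⊖ r`: remove robot `r`. -/
noncomputable def removeR {V R : Type} (a : Arrangement V R) (r : R) : Arrangement V R :=
  fun w => if a w = some r then none else a w

/-- The arrangement `a ⊕ (r, v)`: add robot `r` at vertex `v`. -/
noncomputable def addR {V R : Type} (a : Arrangement V R) (r : R) (v : V) :
    Arrangement V R :=
  fun w => if w = v then some r else a w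

/-- `c ⊖ (r, u)`: the set of configurations obtained from configuration `c` by
removing robot `r` exiting via vertex `u`. -/
def ominusC {V R : Type} (G : SimpleGraph V) (S : Set V)
    (c : Set (Arrangement V R)) (r : R) (u : V) : Set (Set (Arrangement V R)) :=
  {C | ∃ a ∈ c, a u = some r ∧ C = clsIn G S (removeR a r)}

/-- `c ⊕ (r, v)`: the set of configurations obtained from configuration `c` by
adding robot `r` entering at vertex `v`. -/
def oplusC {V R : Type} (G : SimpleGraph V) (S : Set V)
    (c : Set (Arrangement V R)) (r : R) (v : V) : Set (Set (Arrangement V R)) :=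
  {C | ∃ a ∈ c, a v = none ∧ C = clsIn G S (addR a r v)}

/-- The restriction `a / S` of an arrangement to a vertex set. -/
noncomputable def restrictArr {V R : Type} (a : Arrangement V R) (S : Set V) :
    Arrangement V R :=
  fun v => if v ∈ S then a v else none

/-!
Restricting to `S x` commutes with a move inside `S x`, and such a move is undone by the
reverse move, so `a / S x` and `s(a) / S x` are mutually reachable within `S x`. For `i ≠ x`
the move touches no vertex of `S i`, so `a / S i = s(a) / S i`.
-/

theorem IsPlan.append {V R : Type} {G : SimpleGraph V} {P Q : List (R × V × V)}
    {a b c : Arrangement V R} (hP : IsPlan G P a b) (hQ : IsPlan G Q b c) :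
    IsPlan G (P ++ Q) a c := by
  induction P generalizing a with
  | nil => cases hP; exact hQ
  | cons s P ih => exact ⟨hP.1, ih hP.2⟩

namespace SimIn

variable {V R : Type} {G : SimpleGraph V} {S : Set V} {a b c : Arrangement V R}

theorem symm (h : SimIn G S a b) : SimIn G S b a := ⟨h.2, h.1⟩

theorem trans (hab : SimIn G S a b) (hbc : SimIn G S b c) : SimIn G S a c := by
  obtain ⟨⟨P₁, hP₁, hab⟩, ⟨Q₁, hQ₁, hba⟩⟩ := hab
  obtain ⟨⟨P₂, hP₂, hbc⟩, ⟨Q₂, hQ₂, hcb⟩⟩ := hbc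
  refine ⟨⟨P₁ ++ P₂, ?_, hab.append hbc⟩, ⟨Q₂ ++ Q₁, ?_, hcb.append hba⟩⟩
  · simpa only [List.forall_mem_append] using ⟨hP₁, hP₂⟩
  · simpa only [List.forall_mem_append] using ⟨hQ₂, hQ₁⟩

theorem clsIn_eq (h : SimIn G S a b) : clsIn G S a = clsIn G S b :=
  Set.ext fun _ => ⟨h.symm.trans, h.trans⟩

end SimIn

section Step

variable {V R : Type} {G : SimpleGraph V} {a : Arrangement V R} {r : R} {u v : V}

theorem Applicable.reverse (h : Applicable G a (r, u, v)) :
    Applicable G (applyStep a (r, u, v)) (r, v, u) := by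
  obtain ⟨hadj, -, -⟩ := h
  refine ⟨hadj.symm, ?_, ?_⟩ <;> simp [applyStep, hadj.ne]

theorem applyStep_reverse (h : Applicable G a (r, u, v)) :
    applyStep (applyStep a (r, u, v)) (r, v, u) = a := by
  obtain ⟨hadj, hau, hav⟩ := h
  funext w
  by_cases hwu : w = u
  · simp [applyStep, hwu, hau]
  · by_cases hwv : w = v <;> simp [applyStep, hwu, hwv, hav, hadj.ne']

theorem simIn_applyStep {S : Set V} (h : Applicable G a (r, u, v)) (hu : u ∈ S) (hv : v ∈ S) :
    SimIn G S a (applyStep a (r, u, v)) :=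
  ⟨⟨[(r, u, v)], by simp [hu, hv], h, rfl⟩,
    ⟨[(r, v, u)], by simp [hu, hv], h.reverse, applyStep_reverse h⟩⟩

theorem Applicable.restrictArr {S : Set V} (h : Applicable G a (r, u, v)) (hu : u ∈ S)
    (hv : v ∈ S) : Applicable G (restrictArr a S) (r, u, v) := by
  obtain ⟨hadj, hau, hav⟩ := h
  exact ⟨hadj, by simp [_root_.restrictArr, hu, hau], by simp [_root_.restrictArr, hv, hav]⟩

theorem restrictArr_applyStep_of_mem {S : Set V} (hu : u ∈ S) (hv : v ∈ S) :
    restrictArr (applyStep a (r, u, v)) S = applyStep (restrictArr a S) (r, u, v) := by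
  funext w
  by_cases hwv : w = v
  · simp [applyStep, restrictArr, hwv, hv]
  · by_cases hwu : w = u <;> simp [applyStep, restrictArr, hwu, hwv, hu]

theorem restrictArr_applyStep_of_notMem {S : Set V} (hu : u ∉ S) (hv : v ∉ S) :
    restrictArr (applyStep a (r, u, v)) S = restrictArr a S := by
  funext w
  by_cases hw : w ∈ S
  · have hwu : w ≠ u := by rintro rfl; exact hu hw
    have hwv : w ≠ v := by rintro rfl; exact hv hw
    simp [applyStep, restrictArr, hw, hwu, hwv]
  · simp [restrictArr, hw]

end Step

theorem internal_move_preserves_configuration_general {V R : Type} {m : ℕ}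
    (G : SimpleGraph V) (S : Fin m → Set V)
    (hdisj : ∀ i j, i ≠ j → Disjoint (S i) (S j))
    (a : Arrangement V R) (r : R) (u v : V) (x : Fin m)
    (hu : u ∈ S x) (hv : v ∈ S x)
    (happ : Applicable G a (r, u, v)) :
    ∀ i : Fin m,
      clsIn G (S i) (restrictArr a (S i)) =
        clsIn G (S i) (restrictArr (applyStep a (r, u, v)) (S i)) := by
  intro i
  by_cases hix : i = x
  · subst hix
    rw [restrictArr_applyStep_of_mem hu hv]
    exact (simIn_applyStep (happ.restrictArr hu hv) hu hv).clsIn_eq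
  · have hxi := hdisj i x hix
    rw [restrictArr_applyStep_of_notMem (hxi.notMem_of_mem_right hu)
      (hxi.notMem_of_mem_right hv)]

/-- If `s = (r,u,v)` is a plan-step with both `u` and `v` in the same subgraph
`S x` of the partition, and `s` is applicable to arrangement `a`, then
`γ(a) = γ(s(a))`: internal moves do not change the configuration tuple. -/
theorem internal_move_preserves_configuration {V R : Type} {m : ℕ}
    (G : SimpleGraph V) (S : Fin m → Set V)
    (hdisj : ∀ i j, i ≠ j → Disjoint (S i) (S j))
    (hcover : (⋃ i, S i) = Set.univ)
    (a : Arrangement V R) (r : R) (u v : V) (x : Fin m)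
    (hu : u ∈ S x) (hv : v ∈ S x)
    (happ : Applicable G a (r, u, v)) :
    ∀ i : Fin m,
      clsIn G (S i) (restrictArr a (S i)) =
        clsIn G (S i) (restrictArr (applyStep a (r, u, v)) (S i)) :=
  internal_move_preserves_configuration_general G S hdisj a r u v x hu hv happ
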